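/- Let G be a finite simple graph of order n and let 0 ≤ k < n. Then G is k-{1,2}-factor-critical if and only if for every subset S of V(G) with |S| ≥ k, the number of isolated vertices of G − S is at most |S| − k. -/

import Mathlib

/-!
By Hall's theorem, a finite graph has a `{1,2}`-factor iff `|A| ≤ |N(A)|` for every vertex set
`A`. Indeed, a Hall injection `v ↦ f v ∈ N(v)` is a permutation, and the edges `{v, f v}` form a
`{1,2}`-factor (the 2-cycles of `f` give the single edges). Conversely, if in a factor every
vertex spreads weight `1` evenly over its neighbours, then every vertex receives weight at most
`1`, because adjacent vertices have equal degree. Hall's condition is in turn equivalent to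
`i(G - S) ≤ |S|` for all `S`. Applying this to `G - T` with `|T| = k`, the sets `S ⊇ T` of `G`
correspond to the sets `S \ T` of `G - T`, which gives the theorem.
-/

/-- A `{1,2}`-factor of `G` : a spanning subgraph `H ≤ G` all of whose connected components
are regular of degree one or two, i.e. every vertex has degree 1 or 2 in `H` and any two
vertices in the same component of `H` have equal degree. -/
def SimpleGraph.Has12Factor {V : Type*} [Fintype V] (G : SimpleGraph V) : Prop :=
  ∃ H : SimpleGraph V, H ≤ G ∧
    (∀ v : V, (H.neighborSet v).ncard = 1 ∨ (H.neighborSet v).ncard = 2) ∧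
    (∀ u v : V, H.Reachable u v → (H.neighborSet u).ncard = (H.neighborSet v).ncard)

/-- `G` is `k`-`{1,2}`-factor-critical if deleting any set of exactly `k` vertices leaves
a graph having a `{1,2}`-factor. -/
def SimpleGraph.Is12FactorCritical {V : Type*} [Fintype V] [DecidableEq V]
    (G : SimpleGraph V) (k : ℕ) : Prop :=
  ∀ S : Finset V, S.card = k → (G.induce ((Sᶜ : Finset V) : Set V)).Has12Factor

open Finset

namespace SimpleGraph

variable {W : Type*}

theorem ncard_neighborSet_eq_degree (H : SimpleGraph W) [H.LocallyFinite] (v : W) :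
    (H.neighborSet v).ncard = H.degree v := by
  rw [Set.ncard_eq_toFinset_card', Set.toFinset_card, card_neighborSet_eq_degree]

/-- Double counting with weight `1 / deg` on the edges between `A` and its neighbourhood. -/
theorem card_le_card_biUnion_neighborFinset_of_degree_eq [DecidableEq W] (H : SimpleGraph W)
    [DecidableRel H.Adj] [H.LocallyFinite] (hpos : ∀ v, 0 < H.degree v)
    (hdeg : ∀ u v, H.Adj u v → H.degree u = H.degree v) (A : Finset W) :
    #A ≤ #(A.biUnion fun v => H.neighborFinset v) := by
  set N := A.biUnion fun v => H.neighborFinset v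
  have hsum (v : W) : ∑ u ∈ H.neighborFinset v, (1 / H.degree v : ℚ) = 1 := by
    rw [sum_const, card_neighborFinset_eq_degree, nsmul_eq_mul]
    exact mul_one_div_cancel (by exact_mod_cast (hpos v).ne')
  have hfilter {v : W} (hv : v ∈ A) : N.filter (H.Adj v) = H.neighborFinset v := by
    ext u
    simpa [N] using fun h => ⟨v, hv, h⟩
  suffices (#A : ℚ) ≤ #N by exact_mod_cast this
  calc (#A : ℚ) = ∑ v ∈ A, ∑ u ∈ N.filter (H.Adj v), (1 / H.degree u : ℚ) := by
        rw [card_eq_sum_ones, Nat.cast_sum, Nat.cast_one]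
        refine sum_congr rfl fun v hv => (hsum v).symm.trans ?_
        rw [hfilter hv]
        refine sum_congr rfl fun u hu => ?_
        rw [hdeg v u ((mem_neighborFinset _ _ _).1 hu)]
    _ = ∑ u ∈ N, ∑ v ∈ A.filter (H.Adj · u), (1 / H.degree u : ℚ) :=
        sum_comm' fun v u => by simp only [mem_filter]; tauto
    _ ≤ ∑ u ∈ N, ∑ v ∈ H.neighborFinset u, (1 / H.degree u : ℚ) := by
        refine sum_le_sum fun u _ => sum_le_sum_of_subset_of_nonneg ?_ fun _ _ _ => by positivity
        intro v hv
        simpa using (mem_filter.1 hv).2.symm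
    _ = #N := by simp only [hsum, sum_const, nsmul_eq_mul, mul_one]

theorem Has12Factor.card_le_card_biUnion_neighborFinset [Fintype W] [DecidableEq W]
    {G : SimpleGraph W} [DecidableRel G.Adj] (hG : G.Has12Factor) (A : Finset W) :
    #A ≤ #(A.biUnion fun v => G.neighborFinset v) := by
  classical
  obtain ⟨H, hle, hdeg, hreg⟩ := hG
  simp only [ncard_neighborSet_eq_degree] at hdeg hreg
  calc #A ≤ #(A.biUnion fun v => H.neighborFinset v) :=
        H.card_le_card_biUnion_neighborFinset_of_degree_eq (fun v => by have := hdeg v; omega)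
          (fun u v huv => hreg u v huv.reachable) A
    _ ≤ #(A.biUnion fun v => G.neighborFinset v) :=
        card_le_card <| biUnion_mono fun v _ u => by simpa using @hle v u

def ofPerm (f : Equiv.Perm W) : SimpleGraph W := fromRel fun u v => v = f u

section ofPerm

variable {f : Equiv.Perm W} (hf : ∀ v, f v ≠ v)
include hf

theorem ofPerm_adj_iff {u v : W} : (ofPerm f).Adj u v ↔ v = f u ∨ u = f v := by
  refine ⟨fun h => h.2, fun h => ⟨?_, h⟩⟩
  rintro rfl
  exact h.elim (hf u).symm (hf u).symm

theorem neighborSet_ofPerm (v : W) : (ofPerm f).neighborSet v = {f v, f.symm v} := by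
  ext u
  rw [mem_neighborSet, ofPerm_adj_iff hf, Set.mem_insert_iff, Set.mem_singleton_iff,
    Equiv.eq_symm_apply, eq_comm (a := v)]

theorem ncard_neighborSet_ofPerm_apply (v : W) :
    ((ofPerm f).neighborSet (f v)).ncard = ((ofPerm f).neighborSet v).ncard := by
  rw [neighborSet_ofPerm hf, neighborSet_ofPerm hf,
    ← Set.ncard_image_of_injective {f v, f.symm v} f.injective, Set.image_pair,
    Equiv.symm_apply_apply, Equiv.apply_symm_apply]

end ofPerm

theorem has12Factor_of_perm [Fintype W] (G : SimpleGraph W) (f : Equiv.Perm W)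
    (hf : ∀ v, G.Adj v (f v)) : G.Has12Factor := by
  have hne : ∀ v, f v ≠ v := fun v => (hf v).ne'
  have hadj {u v : W} (huv : (ofPerm f).Adj u v) :
      ((ofPerm f).neighborSet u).ncard = ((ofPerm f).neighborSet v).ncard := by
    rcases (ofPerm_adj_iff hne).1 huv with rfl | rfl
    exacts [(ncard_neighborSet_ofPerm_apply hne u).symm, ncard_neighborSet_ofPerm_apply hne v]
  refine ⟨ofPerm f, fun u v huv => ?_, fun v => ?_, fun u v hr => ?_⟩
  · rcases (ofPerm_adj_iff hne).1 huv with rfl | rfl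
    exacts [hf u, (hf v).symm]
  · rw [neighborSet_ofPerm hne]
    by_cases h : f v = f.symm v
    · simp [h]
    · simp [Set.ncard_pair h]
  · obtain ⟨p⟩ := hr
    induction p with
    | nil => rfl
    | cons h _ ih => exact (hadj h).trans ih

theorem has12Factor_iff_forall_card_le_card_biUnion_neighborFinset [Fintype W] [DecidableEq W]
    (G : SimpleGraph W) [DecidableRel G.Adj] :
    G.Has12Factor ↔ ∀ A : Finset W, #A ≤ #(A.biUnion fun v => G.neighborFinset v) := by
  refine ⟨Has12Factor.card_le_card_biUnion_neighborFinset, fun hall => ?_⟩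
  obtain ⟨f, hinj, hf⟩ := (all_card_le_biUnion_card_iff_exists_injective _).1 hall
  exact G.has12Factor_of_perm (Equiv.ofBijective f (Finite.injective_iff_bijective.1 hinj))
    fun v => (mem_neighborFinset _ _ _).1 (hf v)

/-- The isolated vertices of `G - S`. -/
def isolatedOutside (G : SimpleGraph W) (S : Finset W) : Set W :=
  {v | v ∉ S ∧ ∀ u, u ∉ S → ¬ G.Adj v u}

section Hall

variable [Fintype W] [DecidableEq W] (G : SimpleGraph W) [DecidableRel G.Adj]

theorem ncard_isolatedOutside_le_card
    (hall : ∀ A : Finset W, #A ≤ #(A.biUnion fun v => G.neighborFinset v)) (S : Finset W) :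
    (G.isolatedOutside S).ncard ≤ #S := by
  classical
  rw [← Set.coe_toFinset (G.isolatedOutside S), Set.ncard_coe_finset]
  refine (hall _).trans (card_le_card <| biUnion_subset.2 fun v hv u hu => ?_)
  rw [Set.mem_toFinset] at hv
  by_contra huS
  exact hv.2 u huS ((mem_neighborFinset _ _ _).1 hu)

/-- The vertices of `A \ N(A)` are isolated in `G - S` for `S = N(A \ N(A)) ⊆ N(A) \ A`. -/
theorem card_le_card_biUnion_neighborFinset_of_forall_ncard_isolatedOutside_le
    (h : ∀ S : Finset W, (G.isolatedOutside S).ncard ≤ #S) (A : Finset W) :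
    #A ≤ #(A.biUnion fun v => G.neighborFinset v) := by
  set N := A.biUnion fun v => G.neighborFinset v
  set I := A \ N
  set S := I.biUnion fun v => G.neighborFinset v
  have hmemN {u v : W} (hv : v ∈ A) (huv : G.Adj v u) : u ∈ N := by
    simpa [N] using ⟨v, hv, huv⟩
  have hSN : S ⊆ N \ A := fun u hu => by
    obtain ⟨v, hv, huv⟩ : ∃ v ∈ I, G.Adj v u := by simpa [S] using hu
    obtain ⟨hvA, hvN⟩ := mem_sdiff.1 hv
    exact mem_sdiff.2 ⟨hmemN hvA huv, fun huA => hvN (hmemN huA huv.symm)⟩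
  have hIiso : (I : Set W) ⊆ G.isolatedOutside S := fun v hv => by
    obtain ⟨hvA, hvN⟩ := mem_sdiff.1 hv
    refine ⟨fun hvS => (mem_sdiff.1 (hSN hvS)).2 hvA, fun u huS huv => huS ?_⟩
    simpa [S] using ⟨v, hv, huv⟩
  have hIS : #I ≤ #S := by
    rw [← Set.ncard_coe_finset]
    exact (Set.ncard_le_ncard hIiso).trans (h S)
  have hNA : #(N \ A) + #(A ∩ N) = #N := inter_comm N A ▸ card_sdiff_add_card_inter N A
  have hAN : #I + #(A ∩ N) = #A := card_sdiff_add_card_inter A N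
  have := card_le_card hSN
  omega

end Hall

theorem has12Factor_iff_forall_ncard_isolatedOutside_le [Fintype W] (G : SimpleGraph W) :
    G.Has12Factor ↔ ∀ S : Finset W, (G.isolatedOutside S).ncard ≤ #S := by
  classical
  rw [has12Factor_iff_forall_card_le_card_biUnion_neighborFinset]
  exact ⟨G.ncard_isolatedOutside_le_card,
    G.card_le_card_biUnion_neighborFinset_of_forall_ncard_isolatedOutside_le⟩

section InduceCompl

variable [Fintype W] [DecidableEq W] {T S : Finset W} {S' : Finset ((Tᶜ : Finset W) : Set W)}

theorem map_subtype_eq_sdiff (hS' : ∀ w, w ∈ S' ↔ ↑w ∈ S) :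
    S'.map (Function.Embedding.subtype _) = S \ T := by
  ext v
  simp only [mem_map, Function.Embedding.coe_subtype, mem_sdiff]
  refine ⟨?_, fun ⟨hvS, hvT⟩ => ⟨⟨v, by simpa using hvT⟩, (hS' _).2 hvS, rfl⟩⟩
  rintro ⟨w, hw, rfl⟩
  exact ⟨(hS' w).1 hw, by simpa using w.2⟩

theorem ncard_isolatedOutside_induce_compl (G : SimpleGraph W) (hTS : T ⊆ S)
    (hS' : ∀ w, w ∈ S' ↔ ↑w ∈ S) :
    ((G.induce ((Tᶜ : Finset W) : Set W)).isolatedOutside S').ncard =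
      (G.isolatedOutside S).ncard := by
  have hout {u : W} (hu : u ∉ S) : u ∈ ((Tᶜ : Finset W) : Set W) := by
    simpa using fun huT => hu (hTS huT)
  have hpre : (G.induce ((Tᶜ : Finset W) : Set W)).isolatedOutside S' =
      Subtype.val ⁻¹' G.isolatedOutside S := by
    ext w
    simp only [isolatedOutside, Set.mem_ofPred_eq, Set.mem_preimage, hS', comap_adj,
      Function.Embedding.coe_subtype]
    exact and_congr_right fun _ =>
      ⟨fun h u hu => h ⟨u, hout hu⟩ hu, fun h u hu => h u hu⟩
  rw [hpre, Set.ncard_preimage_of_injective_subset_range Subtype.val_injective]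
  exact fun v hv => ⟨⟨v, hout hv.1⟩, rfl⟩

theorem has12Factor_induce_compl_iff (G : SimpleGraph W) (T : Finset W) :
    (G.induce ((Tᶜ : Finset W) : Set W)).Has12Factor ↔
      ∀ S : Finset W, T ⊆ S → (G.isolatedOutside S).ncard ≤ #S - #T := by
  classical
  rw [has12Factor_iff_forall_ncard_isolatedOutside_le]
  refine ⟨fun h S hTS => ?_, fun h S' => ?_⟩
  · set S' := univ.filter fun w : ((Tᶜ : Finset W) : Set W) => ↑w ∈ S
    have hS' (w) : w ∈ S' ↔ ↑w ∈ S := by simp [S']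
    rw [← ncard_isolatedOutside_induce_compl G hTS hS', ← card_sdiff_of_subset hTS,
      ← map_subtype_eq_sdiff hS', card_map]
    exact h S'
  · have hS' (w) : w ∈ S' ↔ ↑w ∈ T ∪ S'.map (Function.Embedding.subtype _) := by
      have hwT : ↑w ∉ T := by simpa using w.2
      simp [hwT]
    have hTS := subset_union_left (s₂ := S'.map (Function.Embedding.subtype _)) (s₁ := T)
    rw [ncard_isolatedOutside_induce_compl G hTS hS']
    have := h _ hTS
    rwa [← card_sdiff_of_subset hTS, ← map_subtype_eq_sdiff hS', card_map] at this

end InduceCompl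

end SimpleGraph

theorem stmt_1_general {V : Type*} [Fintype V] [DecidableEq V] (G : SimpleGraph V) (k : ℕ) :
    G.Is12FactorCritical k ↔
      ∀ S : Finset V, k ≤ S.card →
        {v : V | v ∉ S ∧ ∀ u : V, u ∉ S → ¬ G.Adj v u}.ncard ≤ S.card - k := by
  change (∀ T : Finset V, #T = k → _) ↔
    ∀ S : Finset V, k ≤ #S → (G.isolatedOutside S).ncard ≤ #S - k
  simp only [SimpleGraph.has12Factor_induce_compl_iff]
  refine ⟨fun h S hkS => ?_, fun h T hT S hTS => hT ▸ h S (hT ▸ card_le_card hTS)⟩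
  obtain ⟨T, hTS, hT⟩ := exists_subset_card_eq hkS
  exact hT ▸ h T hT S hTS

/-- `G` of order `n`, `0 ≤ k < n`, is `k`-`{1,2}`-factor-critical iff
`i(G - S) ≤ |S| - k` for every `S ⊆ V(G)` with `|S| ≥ k`. -/
theorem stmt_1 {V : Type*} [Fintype V] [DecidableEq V] (G : SimpleGraph V) (k : ℕ)
    (hk : k < Fintype.card V) :
    G.Is12FactorCritical k ↔
      ∀ S : Finset V, k ≤ S.card →
        {v : V | v ∉ S ∧ ∀ u : V, u ∉ S → ¬ G.Adj v u}.ncard ≤ S.card - k :=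
  stmt_1_general G k
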